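/- Let δ ∈ (0,1), let h ≥ 3 and k be integers with ⌊h/3⌋ ≤ k ≤ h−2, suppose δ ≤ (3−(k−1)δ)/(h−k+1), and let α > 0 be real. Let R(h,δ,k) = {(s₁,…,s_k) ∈ ℝ^k : δ ≤ s₁ ≤ … ≤ s_k, s₁+…+s_k ≤ 1, s₁+…+s_{k−1}+(h−k+1)s_k ≤ 3, and s₁+…+s_k ≥ (h−k−3)/(h−k−1)}. Then ∫_{R(h,δ,k)} ds₁⋯ds_k/(s₁⋯s_k) ≤ [exp(−α·(h−k−3)/(h−k−1))/k!] · (∫_δ^{(3−(k−1)δ)/(h−k+1)} exp(αs)/s ds)^k. -/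

import Mathlib

/-!
On the region every coordinate lies in `[δ, β]`, `β = (3 - (k-1)δ)/(h-k+1)` (the first `k - 1`
coordinates are at least `δ`), and the coordinates sum to at least `c = (h-k-3)/(h-k-1)`, so there
`1/(s₁⋯s_k) ≤ e^{-αc} ∏ e^{α sᵢ}/sᵢ`. Keep only the ordering constraint `s₁ ≤ ⋯ ≤ s_k`: the `k!`
cones obtained by permuting coordinates cover `ℝ^k`, overlap only on the null set of tuples with a
repeated entry, and carry the same integral of a symmetric function, so the integral over the
ordered cone is `1/k!` times the integral over `ℝ^k`, which factors as a `k`-th power.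
-/

open MeasureTheory Finset Real

section OrderedIntegral

variable {ι : Type*}

lemma measurableSet_setOf_monotone [Preorder ι] [Countable ι] :
    MeasurableSet {s : ι → ℝ | Monotone s} := by
  have : {s : ι → ℝ | Monotone s} = ⋂ (i) (j) (_ : i ≤ j), {s | s i ≤ s j} := by
    ext s; simp [Monotone]
  rw [this]
  exact .iInter fun i => .iInter fun j => .iInter fun _ =>
    measurableSet_le (measurable_pi_apply i) (measurable_pi_apply j)

variable [Fintype ι]

lemma volume_setOf_apply_eq_apply [DecidableEq ι] {i j : ι} (hij : i ≠ j) :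
    volume {s : ι → ℝ | s i = s j} = 0 := by
  let V : Submodule ℝ (ι → ℝ) :=
    LinearMap.ker ((LinearMap.proj i : (ι → ℝ) →ₗ[ℝ] ℝ) - LinearMap.proj j)
  have hV : V ≠ ⊤ := fun hV => by
    have : Pi.single i (1 : ℝ) ∈ V := hV ▸ Submodule.mem_top
    simp [V, Pi.single_eq_of_ne' hij] at this
  have hVs : (V : Set (ι → ℝ)) = {s | s i = s j} := by ext s; simp [V, sub_eq_zero]
  exact hVs ▸ Measure.addHaar_submodule volume V hV

lemma ae_injective : ∀ᵐ s : ι → ℝ, Function.Injective s := by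
  classical
  refine measure_mono_null (fun s hs => ?_) (measure_iUnion_null fun i : ι =>
    measure_iUnion_null fun j : ι => measure_iUnion_null fun hij : i ≠ j =>
      volume_setOf_apply_eq_apply hij)
  obtain ⟨i, j, hij, hne⟩ := Function.not_injective_iff.1 hs
  simp only [Set.mem_iUnion]
  exact ⟨i, j, hne, hij⟩

lemma setIntegral_preimage_comp_perm {F : (ι → ℝ) → ℝ} (σ : Equiv.Perm ι)
    (hF : ∀ s, F (s ∘ σ) = F s) (A : Set (ι → ℝ)) :
    ∫ s in (· ∘ σ) ⁻¹' A, F s = ∫ s in A, F s := by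
  let T := MeasurableEquiv.piCongrLeft (fun _ : ι => ℝ) σ.symm
  have hT : ⇑T = (· ∘ σ) := funext fun s => funext fun i => by
    simpa [T, MeasurableEquiv.coe_piCongrLeft] using
      Equiv.piCongrLeft_apply_apply (fun _ : ι => ℝ) σ.symm s (σ i)
  have := (volume_measurePreserving_piCongrLeft (fun _ : ι => ℝ) σ.symm).setIntegral_preimage_emb
    T.measurableEmbedding F A
  rw [hT] at this
  simpa only [hF] using this

theorem factorial_mul_setIntegral_monotone_prod {n : ℕ} {g : ℝ → ℝ} (hg : Integrable g) :
    n.factorial * ∫ s : Fin n → ℝ in {s | Monotone s}, ∏ i, g (s i) = (∫ x, g x) ^ n := by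
  let M : Equiv.Perm (Fin n) → Set (Fin n → ℝ) := fun σ => {s | Monotone (s ∘ σ)}
  have hM : ∀ σ, ∫ s in M σ, ∏ i, g (s i) = ∫ s in {s : Fin n → ℝ | Monotone s}, ∏ i, g (s i) :=
    fun σ => setIntegral_preimage_comp_perm (F := fun s => ∏ i, g (s i)) σ
      (fun s => Equiv.prod_comp σ fun i => g (s i)) {s | Monotone s}
  have hmeas : ∀ σ, NullMeasurableSet (M σ) := fun σ =>
    (measurableSet_setOf_monotone.preimage (by fun_prop)).nullMeasurableSet
  have hdisj : Pairwise (Function.onFun (AEDisjoint volume) M) := by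
    refine fun σ τ hστ => measure_mono_null (fun s hs => ?_) (ae_iff.1 ae_injective)
    exact fun hinj => hστ <| Equiv.ext fun i =>
      hinj (congrFun (Tuple.unique_monotone hs.1 hs.2) i)
  have hcover : ⋃ σ, M σ = Set.univ :=
    Set.eq_univ_of_forall fun s => Set.mem_iUnion.2 ⟨Tuple.sort s, Tuple.monotone_sort s⟩
  have hG : Integrable fun s : Fin n → ℝ => ∏ i, g (s i) :=
    Integrable.fintype_prod (f := fun _ => g) fun _ => hg
  calc n.factorial * ∫ s in {s | Monotone s}, ∏ i, g (s i)
      = ∑ σ, ∫ s in M σ, ∏ i, g (s i) := by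
        simp [hM, Fintype.card_perm]
    _ = ∫ s in ⋃ σ, M σ, ∏ i, g (s i) := by
        rw [integral_iUnion_ae hmeas hdisj hG.integrableOn, tsum_fintype]
    _ = (∫ x, g x) ^ n := by
        rw [hcover, Measure.restrict_univ, volume_pi, integral_fintype_prod_eq_pow,
          Fintype.card_fin]

end OrderedIntegral

lemma Monotone.le_div_of_sum_init_add_mul_last_le {k : ℕ} (hk : k - 1 < k) {s : Fin k → ℝ}
    (hs : Monotone s) {δ a m : ℝ} (hm : 0 < m) (hδ : ∀ i, δ ≤ s i)
    (hsum : ∑ i ∈ univ.filter (fun i : Fin k => (i : ℕ) < k - 1), s i + m * s ⟨k - 1, hk⟩ ≤ a)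
    (i : Fin k) : s i ≤ (a - ((k : ℝ) - 1) * δ) / m := by
  have hinit : ((k : ℝ) - 1) * δ ≤ ∑ i ∈ univ.filter (fun i : Fin k => (i : ℕ) < k - 1), s i := by
    have := card_nsmul_le_sum (univ.filter fun i : Fin k => (i : ℕ) < k - 1) s δ fun i _ => hδ i
    rwa [Fin.card_filter_val_lt, min_eq_right (by omega), nsmul_eq_mul,
      Nat.cast_sub (by omega), Nat.cast_one] at this
  have hlast : s i ≤ s ⟨k - 1, hk⟩ := hs (Fin.le_def.2 (Nat.le_sub_one_of_lt i.isLt))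
  rw [le_div_iff₀ hm]
  nlinarith

lemma prod_inv_le_exp_mul_prod_exp_div {ι : Type*} [Fintype ι] {s : ι → ℝ} {α c : ℝ}
    (hα : 0 ≤ α) (hs : ∀ i, 0 ≤ s i) (hc : c ≤ ∑ i, s i) :
    ∏ i, (s i)⁻¹ ≤ exp (-α * c) * ∏ i, exp (α * s i) / s i := by
  have : exp (-α * c) * ∏ i, exp (α * s i) / s i = exp (α * (∑ i, s i - c)) * ∏ i, (s i)⁻¹ := by
    simp_rw [div_eq_mul_inv, prod_mul_distrib, ← exp_sum, ← mul_assoc, ← exp_add, ← mul_sum]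
    ring_nf
  rw [this]
  exact le_mul_of_one_le_left (prod_nonneg fun i _ => inv_nonneg.2 (hs i))
    (one_le_exp (mul_nonneg hα (sub_nonneg.2 hc)))

theorem setIntegral_prod_inv_le_of_forall_monotone {n : ℕ} {S : Set (Fin n → ℝ)}
    (hS : MeasurableSet S) {a b c α : ℝ} (ha : 0 < a) (hab : a ≤ b) (hα : 0 ≤ α)
    (hmono : ∀ s ∈ S, Monotone s) (hbox : ∀ s ∈ S, ∀ i, s i ∈ Set.Icc a b)
    (hc : ∀ s ∈ S, c ≤ ∑ i, s i) :
    ∫ s in S, ∏ i, (s i)⁻¹ ≤ exp (-α * c) / n.factorial * (∫ x in a..b, exp (α * x) / x) ^ n := by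
  set g : ℝ → ℝ := (Set.Icc a b).indicator fun x => exp (α * x) / x
  have hg : Integrable g := (integrable_indicator_iff measurableSet_Icc).2 <|
    ContinuousOn.integrableOn_Icc <| continuousOn_of_forall_continuousAt fun x hx => by
      fun_prop (disch := linarith [hx.1])
  have hg0 : 0 ≤ g := Set.indicator_nonneg fun x hx => div_nonneg (exp_pos _).le (ha.le.trans hx.1)
  have hg_eq : ∫ x, g x = ∫ x in a..b, exp (α * x) / x := by
    rw [integral_indicator measurableSet_Icc, integral_Icc_eq_integral_Ioc,
      intervalIntegral.integral_of_le hab]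
  have hbound : ∀ s ∈ S, ∏ i, (s i)⁻¹ ≤ exp (-α * c) * ∏ i, g (s i) := fun s hs => by
    simp only [g, Set.indicator_of_mem (hbox s hs _)]
    exact prod_inv_le_exp_mul_prod_exp_div hα (fun i => ha.le.trans (hbox s hs i).1) (hc s hs)
  have hG : Integrable fun s : Fin n → ℝ => exp (-α * c) * ∏ i, g (s i) :=
    (Integrable.fintype_prod (f := fun _ => g) fun _ => hg).const_mul _
  calc ∫ s in S, ∏ i, (s i)⁻¹
      ≤ ∫ s in S, exp (-α * c) * ∏ i, g (s i) :=
        integral_mono_of_nonneg (ae_restrict_of_forall_mem hS fun s hs =>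
          prod_nonneg fun i _ => inv_nonneg.2 (ha.le.trans (hbox s hs i).1))
          hG.integrableOn (ae_restrict_of_forall_mem hS hbound)
    _ ≤ ∫ s in {s | Monotone s}, exp (-α * c) * ∏ i, g (s i) :=
        setIntegral_mono_set hG.integrableOn
          (ae_of_all _ fun s => mul_nonneg (exp_pos _).le (prod_nonneg fun i _ => hg0 _))
          (ae_of_all _ hmono)
    _ = exp (-α * c) / n.factorial * (∫ x in a..b, exp (α * x) / x) ^ n := by
        rw [integral_const_mul, ← hg_eq, ← factorial_mul_setIntegral_monotone_prod hg]
        field_simp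

/-- Let `δ ∈ (0,1)`, `h ≥ 3`, `⌊h/3⌋ ≤ k ≤ h−2` with
`δ ≤ (3−(k−1)δ)/(h−k+1)`, and `α > 0`.  With
`R(h,δ,k) = {s ∈ ℝ^k : δ ≤ s₁ ≤ ⋯ ≤ s_k, s₁+⋯+s_k ≤ 1,
  s₁+⋯+s_{k−1}+(h−k+1)s_k ≤ 3, s₁+⋯+s_k ≥ (h−k−3)/(h−k−1)}`,
one has `∫_{R(h,δ,k)} ds/(s₁⋯s_k)
  ≤ exp(−α(h−k−3)/(h−k−1))/k! · (∫_δ^{(3−(k−1)δ)/(h−k+1)} exp(αs)/s ds)^k`. -/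
theorem integral_second_region_bound (δ : ℝ) (hδ0 : 0 < δ)
    (h : ℕ) (hh : 3 ≤ h) (k : ℕ) (hk1 : h / 3 ≤ k) (hk2 : k + 2 ≤ h)
    (hδk : δ ≤ (3 - ((k : ℝ) - 1) * δ) / ((h : ℝ) - (k : ℝ) + 1))
    (α : ℝ) (hα : 0 < α) :
    (∫ s : Fin k → ℝ in
        {s | (∀ i, δ ≤ s i) ∧ Monotone s ∧ (∑ i, s i) ≤ 1 ∧
          (∑ i ∈ Finset.univ.filter (fun i : Fin k => (i : ℕ) < k - 1), s i)
            + ((h : ℝ) - (k : ℝ) + 1) * s ⟨k - 1, by omega⟩ ≤ 3 ∧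
          ((h : ℝ) - (k : ℝ) - 3) / ((h : ℝ) - (k : ℝ) - 1) ≤ ∑ i, s i},
        ∏ i, (s i)⁻¹) ≤
      Real.exp (-α * (((h : ℝ) - (k : ℝ) - 3) / ((h : ℝ) - (k : ℝ) - 1))) /
          (k.factorial : ℝ) *
        (∫ s in δ..((3 - ((k : ℝ) - 1) * δ) / ((h : ℝ) - (k : ℝ) + 1)),
          Real.exp (α * s) / s) ^ k := by
  have hk : k - 1 < k := by omega
  have hm : (0 : ℝ) < h - k + 1 := by
    have : (k : ℝ) + 2 ≤ h := by exact_mod_cast hk2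
    linarith
  refine setIntegral_prod_inv_le_of_forall_monotone ?_ hδ0 hδk hα.le (fun s hs => hs.2.1)
    (fun s hs i => ⟨hs.1 i, hs.2.1.le_div_of_sum_init_add_mul_last_le hk hm hs.1 hs.2.2.2.1 i⟩)
    (fun s hs => hs.2.2.2.2)
  simp only [Set.ofPred_and, Set.ofPred_forall]
  refine .inter (.iInter fun i => measurableSet_le (by fun_prop) (by fun_prop)) <|
    .inter measurableSet_setOf_monotone <| .inter ?_ <| .inter ?_ ?_ <;>
  exact measurableSet_le (by fun_prop) (by fun_prop)
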